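/- The Leung et al. four-qubit code with codewords |0⟩_L = (1/√2)(|0000⟩+|1111⟩), |1⟩_L = (1/√2)(|0011⟩+|1100⟩) satisfies the Knill–Laflamme error correction conditions for the error set {I, A₁^(1), A₁^(2), A₁^(3), A₁^(4)}, where A₁^(j) denotes the amplitude damping jump operator A₁ = [[0,√γ],[0,0]] acting on qubit j: for all errors E_μ, E_ν in this set, ⟨i_L|E_μ†E_ν|j_L⟩ = C_{μν}δ_{ij} for some constants C_{μν} independent of i, j. -/

import Mathlib

open Matrix Kronecker

noncomputable def A1 (γ : ℝ) : Matrix (Fin 2) (Fin 2) ℂ :=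
  !![0, (Real.sqrt γ : ℂ); 0, 0]

def e (a : Fin 2) : Fin 2 → ℂ := fun i => if i = a then 1 else 0

abbrev Q4 := Fin 2 × Fin 2 × Fin 2 × Fin 2

def ket4 (a b c d : Fin 2) : Q4 → ℂ :=
  fun p => e a p.1 * e b p.2.1 * e c p.2.2.1 * e d p.2.2.2

noncomputable def zeroL : Q4 → ℂ :=
  ((1 / Real.sqrt 2 : ℝ) : ℂ) • (ket4 0 0 0 0 + ket4 1 1 1 1)

noncomputable def oneL : Q4 → ℂ :=
  ((1 / Real.sqrt 2 : ℝ) : ℂ) • (ket4 0 0 1 1 + ket4 1 1 0 0)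

noncomputable def codeword : Fin 2 → (Q4 → ℂ) := ![zeroL, oneL]

noncomputable def I2 : Matrix (Fin 2) (Fin 2) ℂ := 1

/-- the error set {I, A₁⁽¹⁾, A₁⁽²⁾, A₁⁽³⁾, A₁⁽⁴⁾} -/
noncomputable def errs (γ : ℝ) : Fin 5 → Matrix Q4 Q4 ℂ :=
  ![1,
    A1 γ ⊗ₖ (I2 ⊗ₖ (I2 ⊗ₖ I2)),
    I2 ⊗ₖ (A1 γ ⊗ₖ (I2 ⊗ₖ I2)),
    I2 ⊗ₖ (I2 ⊗ₖ (A1 γ ⊗ₖ I2)),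
    I2 ⊗ₖ (I2 ⊗ₖ (I2 ⊗ₖ A1 γ))]

/-!
Each error `A₁^(k)` sends `|0⟩_L` and `|1⟩_L` to `√(γ/2)` times a single computational
basis state of odd Hamming weight, and the eight states obtained this way are pairwise
distinct. The codewords are orthonormal and supported on even-weight states, so the vectors
`E_μ |i_L⟩` are pairwise orthogonal, with squared norms `1` for `μ = 0` and `γ/2` otherwise.
-/

namespace Matrix

variable {R m n m' n' : Type*}

/-- The coordinates of the tensor product `v ⊗ w`, indexed as the rows of `A ⊗ₖ B`. -/
def kronVec [Mul R] (v : m → R) (w : n → R) : m × n → R := fun p => v p.1 * w p.2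

theorem kronecker_mulVec_kronVec [CommSemiring R] [Fintype m'] [Fintype n']
    (A : Matrix m m' R) (B : Matrix n n' R) (v : m' → R) (w : n' → R) :
    (A ⊗ₖ B) *ᵥ kronVec v w = kronVec (A *ᵥ v) (B *ᵥ w) := by
  ext ⟨i, j⟩
  simp only [mulVec, dotProduct, kronVec, kroneckerMap_apply, Fintype.sum_prod_type,
    Finset.sum_mul_sum]
  exact Finset.sum_congr rfl fun _ _ => Finset.sum_congr rfl fun _ _ => mul_mul_mul_comm ..

theorem kronVec_zero_left [MulZeroClass R] (w : n → R) : kronVec (0 : m → R) w = 0 := by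
  ext; simp [kronVec]

theorem kronVec_zero_right [MulZeroClass R] (v : m → R) : kronVec v (0 : n → R) = 0 := by
  ext; simp [kronVec]

theorem kronVec_smul_left [Semigroup R] (c : R) (v : m → R) (w : n → R) :
    kronVec (c • v) w = c • kronVec v w := by
  ext; simp [kronVec, mul_assoc]

theorem kronVec_smul_right [CommSemigroup R] (c : R) (v : m → R) (w : n → R) :
    kronVec v (c • w) = c • kronVec v w := by
  ext; simp [kronVec, mul_left_comm]

theorem kronVec_single_single [MulZeroClass R] [DecidableEq m] [DecidableEq n] (a : m) (b : n)
    (x y : R) : kronVec (Pi.single a x) (Pi.single b y) = Pi.single (a, b) (x * y) := by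
  ext ⟨i, j⟩
  by_cases hi : i = a <;> by_cases hj : j = b <;> simp [kronVec, hi, hj]

theorem star_single_one_dotProduct [Fintype n] [DecidableEq n] [NonAssocSemiring R] [StarRing R]
    (i : n) (v : n → R) : star (Pi.single i (1 : R)) ⬝ᵥ v = v i := by
  rw [← Pi.single_star, star_one, single_dotProduct, one_mul]

theorem star_dotProduct_conjTranspose_mul_mulVec [Fintype m] [Fintype n] [CommSemiring R]
    [StarRing R] (A B : Matrix m n R) (v w : n → R) :
    star v ⬝ᵥ (Aᴴ * B) *ᵥ w = star (A *ᵥ v) ⬝ᵥ B *ᵥ w := by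
  rw [← mulVec_mulVec, dotProduct_mulVec, ← star_mulVec]

end Matrix

theorem ket4_eq_kronVec (a b c d : Fin 2) :
    ket4 a b c d = kronVec (Pi.single a 1)
      (kronVec (Pi.single b 1) (kronVec (Pi.single c 1) (Pi.single d 1))) := by
  ext ⟨p, q, r, s⟩
  simp [ket4, e, kronVec, Pi.single_apply]

theorem ket4_eq_single (a b c d : Fin 2) : ket4 a b c d = Pi.single (a, b, c, d) 1 := by
  simp only [ket4_eq_kronVec, kronVec_single_single, mul_one]

theorem A1_mulVec_single_zero (γ : ℝ) : A1 γ *ᵥ Pi.single 0 1 = 0 := by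
  ext i; fin_cases i <;> simp [A1]

theorem A1_mulVec_single_one (γ : ℝ) :
    A1 γ *ᵥ Pi.single 1 1 = (√γ : ℂ) • Pi.single 0 1 := by
  ext i; fin_cases i <;> simp [A1]

theorem errs_zero (γ : ℝ) : errs γ 0 = 1 := rfl

/-- `damped k i` is the basis state to which damping of qubit `k + 1` sends `|i⟩_L`. -/
def damped : Fin 4 → Fin 2 → Q4 :=
  ![![(0, 1, 1, 1), (0, 1, 0, 0)],
    ![(1, 0, 1, 1), (1, 0, 0, 0)],
    ![(1, 1, 0, 1), (0, 0, 0, 1)],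
    ![(1, 1, 1, 0), (0, 0, 1, 0)]]

theorem damped_injective2 : Function.Injective2 damped := by
  unfold Function.Injective2; decide

theorem codeword_apply_damped (i : Fin 2) (k : Fin 4) (j : Fin 2) :
    codeword i (damped k j) = 0 := by
  fin_cases i <;> fin_cases k <;> fin_cases j <;> simp [codeword, zeroL, oneL, damped, ket4, e]

theorem codeword_orthonormal (i j : Fin 2) :
    star (codeword i) ⬝ᵥ codeword j = if i = j then 1 else 0 := by
  fin_cases i <;> fin_cases j <;>
    dsimp only [codeword, Fin.reduceFinMk, Fin.isValue, cons_val] <;>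
    simp only [zeroL, oneL, ket4_eq_single, star_smul, star_add, smul_dotProduct,
      dotProduct_smul, add_dotProduct, dotProduct_add, star_single_one_dotProduct,
      Pi.single_apply] <;>
    norm_num [Prod.ext_iff]
  all_goals
    field_simp
    norm_num [← Complex.ofReal_pow]

theorem errs_succ_mulVec_codeword (γ : ℝ) (k : Fin 4) (i : Fin 2) :
    errs γ k.succ *ᵥ codeword i = ((√γ / √2 : ℝ) : ℂ) • Pi.single (damped k i) 1 := by
  fin_cases k <;> fin_cases i <;>
  · dsimp only [errs, codeword, damped, Fin.reduceFinMk, Fin.reduceSucc, Fin.isValue, cons_val]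
    -- act factorwise on the product states first, before `kronVec_single_single` merges them
    simp only [zeroL, oneL, ket4_eq_kronVec, I2, mulVec_add, mulVec_smul, kronecker_mulVec_kronVec,
      one_mulVec, A1_mulVec_single_one, A1_mulVec_single_zero, kronVec_zero_left,
      kronVec_zero_right, kronVec_smul_left, kronVec_smul_right, zero_add, add_zero, smul_smul]
    simp only [kronVec_single_single, mul_one]
    congr 1
    push_cast
    ring

theorem leung_code_knill_laflamme_general (γ : ℝ) (hγ0 : 0 ≤ γ) :
    ∃ C : Fin 5 → Fin 5 → ℂ, ∀ (μ ν : Fin 5) (i j : Fin 2),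
      star (codeword i) ⬝ᵥ ((errs γ μ)ᴴ * errs γ ν).mulVec (codeword j) =
        C μ ν * (if i = j then 1 else 0) := by
  have hα : star ((√γ / √2 : ℝ) : ℂ) * ((√γ / √2 : ℝ) : ℂ) = γ / 2 := by
    rw [Complex.star_def, Complex.conj_ofReal, ← Complex.ofReal_mul, ← sq, div_pow,
      Real.sq_sqrt hγ0, Real.sq_sqrt zero_le_two]
    norm_num
  refine ⟨fun μ ν => if μ = ν then (if μ = 0 then 1 else (γ / 2 : ℂ)) else 0,
    fun μ ν i j => ?_⟩
  rw [star_dotProduct_conjTranspose_mul_mulVec]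
  rcases Fin.eq_zero_or_eq_succ μ with rfl | ⟨k, rfl⟩ <;>
    rcases Fin.eq_zero_or_eq_succ ν with rfl | ⟨l, rfl⟩
  · simpa [errs_zero] using codeword_orthonormal i j
  · simp [errs_zero, errs_succ_mulVec_codeword, dotProduct_smul, dotProduct_single,
      codeword_apply_damped, (Fin.succ_ne_zero _).symm]
  · simp [errs_zero, errs_succ_mulVec_codeword, star_smul, smul_dotProduct, codeword_apply_damped]
  · simp only [errs_succ_mulVec_codeword, star_smul, smul_dotProduct, dotProduct_smul,
      star_single_one_dotProduct, Pi.single_apply, damped_injective2.eq_iff, smul_eq_mul,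
      Fin.succ_inj, Fin.succ_ne_zero]
    rw [← mul_assoc, mul_comm _ (star _), hα]
    split_ifs <;> simp_all

theorem leung_code_knill_laflamme (γ : ℝ) (hγ0 : 0 ≤ γ) (hγ1 : γ ≤ 1) :
    ∃ C : Fin 5 → Fin 5 → ℂ, ∀ (μ ν : Fin 5) (i j : Fin 2),
      star (codeword i) ⬝ᵥ ((errs γ μ)ᴴ * errs γ ν).mulVec (codeword j) =
        C μ ν * (if i = j then 1 else 0) :=
  leung_code_knill_laflamme_general γ hγ0
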